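/- The Fermat quartic surface in ℙ³(ℂ) defined by x₀⁴ + x₁⁴ + x₂⁴ + x₃⁴ = 0 is smooth and contains exactly 48 lines. -/

import Mathlib

open MvPolynomial

/-- The set of lines (2-dimensional linear subspaces of ℂ⁴) contained in the quartic `{F = 0}`. -/
def linesOn (F : MvPolynomial (Fin 4) ℂ) : Set (Submodule ℂ (Fin 4 → ℂ)) :=
  {W | Module.finrank ℂ ↥W = 2 ∧ ∀ v ∈ W, eval v F = 0}

/-- The quartic surface `{F = 0}` is smooth: `F` and its partial derivatives have no common
zero in ℂ⁴ ∖ {0}. -/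
def IsSmoothQuartic (F : MvPolynomial (Fin 4) ℂ) : Prop :=
  ∀ v : Fin 4 → ℂ, v ≠ 0 → ¬ (eval v F = 0 ∧ ∀ i : Fin 4, eval v (pderiv i F) = 0)

/-- The defining polynomial of the Fermat quartic `X₄₈`. -/
noncomputable def FFermat : MvPolynomial (Fin 4) ℂ :=
  X 0 ^ 4 + X 1 ^ 4 + X 2 ^ 4 + X 3 ^ 4

/-!
The partial derivatives of `F = ∑ xᵢ⁴` are `4 xᵢ³`, which vanish simultaneously only at `0`.

For a line `W ⊆ {F = 0}` pick coordinates `i ≠ j` and vectors `a, b ∈ W` with `a i = 1`, `a j = 0`,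
`b i = 0`, `b j = 1`, and let `k, l` be the other two coordinates. Then
`s⁴ + t⁴ + (a k * s + b k * t)⁴ + (a l * s + b l * t)⁴ = 0` identically, and comparing coefficients
forces `a k = b l = 0` or `b k = a l = 0`. So `W = {x l = γ x i, x k = δ x j}` (or the same with
`k, l` exchanged) with `γ⁴ = δ⁴ = -1`, and conversely every such plane lies on the surface. Written
as `{x q = α x 0, x s = β x r}` with `r < s`, such a plane is given by one of three perfect
matchings of the coordinates and four choices for each of `α, β`, hence `3 · 4 · 4 = 48` lines.
-/

open Module Submodule Polynomial

section LinearAlgebra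

variable {K ι : Type*} [Field K]

theorem Submodule.exists_pivot_pair {W : Submodule K (ι → K)} (hW : 1 < finrank K W) :
    ∃ i j, ∃ a ∈ W, ∃ b ∈ W, a i = 1 ∧ a j = 0 ∧ b i = 0 ∧ b j = 1 := by
  obtain ⟨x, hxW, hx0⟩ := W.ne_bot_iff.mp (by rintro rfl; simp at hW)
  obtain ⟨i, hi⟩ : ∃ i, x i ≠ 0 := by simpa [funext_iff] using hx0
  obtain ⟨y, hyW, hy⟩ : ∃ y ∈ W, y ∉ K ∙ x := by
    by_contra! h
    have := Submodule.finrank_mono h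
    rw [finrank_span_singleton hx0] at this
    omega
  set z := y - (y i / x i) • x
  have hzi : z i = 0 := by simp [z, div_mul_cancel₀ _ hi]
  have hz0 : z ≠ 0 := fun h ↦ hy <| by
    rw [sub_eq_zero.mp h]; exact smul_mem _ _ (mem_span_singleton_self x)
  obtain ⟨j, hj⟩ : ∃ j, z j ≠ 0 := by simpa [funext_iff] using hz0
  set b := (z j)⁻¹ • z
  have hbW : b ∈ W := smul_mem _ _ (sub_mem hyW (smul_mem _ _ hxW))
  have hbi : b i = 0 := by simp [b, hzi]
  have hbj : b j = 1 := by simp [b, inv_mul_cancel₀ hj]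
  refine ⟨i, j, (x i)⁻¹ • (x - x j • b), smul_mem _ _ (sub_mem hxW (smul_mem _ _ hbW)), b, hbW,
    by simp [hbi, inv_mul_cancel₀ hi], by simp [hbj], hbi, hbj⟩

theorem Submodule.span_pair_eq_of_pivots {W : Submodule K (ι → K)} (hW : finrank K W = 2)
    {a b : ι → K} {i j : ι} (ha : a i = 1 ∧ a j = 0) (hb : b i = 0 ∧ b j = 1)
    (haW : a ∈ W) (hbW : b ∈ W) : span K {a, b} = W := by
  have : FiniteDimensional K W := Module.finite_of_finrank_eq_succ hW
  have hli : LinearIndependent K ![a, b] := LinearIndependent.pair_iff.mpr fun s t hst ↦ by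
    have hi := congrFun hst i
    have hj := congrFun hst j
    simp only [Pi.add_apply, Pi.smul_apply, smul_eq_mul, Pi.zero_apply, ha, hb] at hi hj
    exact ⟨by simpa using hi, by simpa using hj⟩
  refine eq_of_le_of_finrank_eq (span_le.mpr (Set.insert_subset haW (by simpa using hbW))) ?_
  rw [hW, ← Matrix.range_cons_cons_empty, finrank_span_eq_card hli, Fintype.card_fin]

def pairLine (p q r s : ι) (α β : K) : Submodule K (ι → K) :=
  LinearMap.ker (LinearMap.prod (LinearMap.proj q - α • LinearMap.proj p)
    (LinearMap.proj s - β • LinearMap.proj r))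

variable {p q r s : ι} {α β : K}

@[simp]
theorem mem_pairLine {v : ι → K} : v ∈ pairLine p q r s α β ↔ v q = α * v p ∧ v s = β * v r := by
  simp [pairLine, sub_eq_zero]

theorem pairLine_comm : pairLine p q r s α β = pairLine r s p q β α := by
  ext; simp [and_comm]

theorem pairLine_swap (hα : α ≠ 0) : pairLine p q r s α β = pairLine q p r s α⁻¹ β := by
  ext; simp [eq_inv_mul_iff_mul_eq₀ hα, eq_comm]

theorem finrank_pairLine [Fintype ι] [DecidableEq ι] (hqp : q ≠ p) (hqr : q ≠ r) (hqs : q ≠ s)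
    (hsp : s ≠ p) (hsr : s ≠ r) : finrank K (pairLine p q r s α β) = Fintype.card ι - 2 := by
  set f : (ι → K) →ₗ[K] K × K := LinearMap.prod (LinearMap.proj q - α • LinearMap.proj p)
    (LinearMap.proj s - β • LinearMap.proj r)
  have hf : Function.Surjective f := fun x ↦ ⟨Pi.single q x.1 + Pi.single s x.2, by
    simp [f, hqp, hqr, hqs, hsp, hsr, hqs.symm]⟩
  have := LinearMap.finrank_range_add_finrank_ker f
  rw [LinearMap.range_eq_top.mpr hf, finrank_top, finrank_prod, finrank_self, finrank_pi] at this
  exact Nat.eq_sub_of_add_eq' this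

end LinearAlgebra

section Quartics

variable {K : Type*} [Field K]

theorem ne_zero_of_pow_eq_neg_one {a : K} {n : ℕ} (hn : n ≠ 0) (h : a ^ n = -1) : a ≠ 0 := by
  rintro rfl
  simp [zero_pow hn] at h

theorem inv_pow_eq_neg_one {a : K} {n : ℕ} (h : a ^ n = -1) : a⁻¹ ^ n = -1 := by
  rw [inv_pow, h, inv_neg, inv_one]

variable [CharZero K]

theorem binary_quartic_coeffs_eq_zero {c₀ c₁ c₂ c₃ c₄ : K}
    (h : ∀ s t : K,
      c₀ * s ^ 4 + c₁ * s ^ 3 * t + c₂ * s ^ 2 * t ^ 2 + c₃ * s * t ^ 3 + c₄ * t ^ 4 = 0) :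
    c₀ = 0 ∧ c₁ = 0 ∧ c₂ = 0 ∧ c₃ = 0 ∧ c₄ = 0 := by
  have e₁₀ := h 1 0
  have e₀₁ := h 0 1
  have e₁₁ := h 1 1
  have e₁₁' := h 1 (-1)
  have e₂₁ := h 2 1
  refine ⟨by linear_combination e₁₀, ?_, ?_, ?_, by linear_combination e₀₁⟩
  · linear_combination e₂₁ / 6 - 2 * e₁₀ + e₀₁ / 2 - e₁₁ / 2 - e₁₁' / 6
  · linear_combination e₁₁ / 2 + e₁₁' / 2 - e₁₀ - e₀₁
  · linear_combination e₁₁ - e₁₁' / 3 - e₂₁ / 6 + 2 * e₁₀ - e₀₁ / 2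

theorem fourth_powers_of_linear_forms {c d e f : K}
    (h : ∀ s t : K, s ^ 4 + t ^ 4 + (c * s + d * t) ^ 4 + (e * s + f * t) ^ 4 = 0) :
    (c = 0 ∧ f = 0 ∧ d ^ 4 = -1 ∧ e ^ 4 = -1) ∨ (d = 0 ∧ e = 0 ∧ c ^ 4 = -1 ∧ f ^ 4 = -1) := by
  obtain ⟨h₀, h₁, h₂, h₃, h₄⟩ := binary_quartic_coeffs_eq_zero (c₀ := 1 + c ^ 4 + e ^ 4)
    (c₁ := 4 * (c ^ 3 * d + e ^ 3 * f)) (c₂ := 6 * (c ^ 2 * d ^ 2 + e ^ 2 * f ^ 2))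
    (c₃ := 4 * (c * d ^ 3 + e * f ^ 3)) (c₄ := 1 + d ^ 4 + f ^ 4)
    fun s t ↦ by linear_combination h s t
  simp only [mul_eq_zero, OfNat.ofNat_ne_zero, false_or] at h₁ h₂ h₃
  by_cases hc : c = 0
  · subst hc
    have he : e ^ 4 = -1 := by linear_combination h₀
    have hf : f = 0 := by
      have : e ^ 3 * f = 0 := by linear_combination h₁
      simpa [ne_zero_of_pow_eq_neg_one four_ne_zero he] using this
    exact Or.inl ⟨rfl, hf, by linear_combination h₄ - hf * f ^ 3, he⟩
  · have hd : d = 0 := by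
      by_contra hd
      -- `(c³d)² = (e³f)²` and `c²d² = -e²f²` force `c²d²(c⁴ + e⁴) = 0`
      have : c ^ 2 * d ^ 2 * (c ^ 4 + e ^ 4) = 0 := by
        linear_combination (c ^ 3 * d - e ^ 3 * f) * h₁ + e ^ 4 * h₂
      have hce : c ^ 4 + e ^ 4 = 0 := by simpa [hc, hd] using this
      exact one_ne_zero (α := K) (by linear_combination h₀ - hce)
    subst hd
    have hf : f ^ 4 = -1 := by linear_combination h₄
    have he : e = 0 := by
      have : e * f ^ 3 = 0 := by linear_combination h₃
      simpa [ne_zero_of_pow_eq_neg_one four_ne_zero hf] using this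
    exact Or.inr ⟨rfl, he, by linear_combination h₀ - he * e ^ 3, hf⟩

end Quartics

theorem Fintype.sum_eq_sum_list_of_nodup {ι M : Type*} [Fintype ι] [DecidableEq ι]
    [AddCommMonoid M] {l : List ι} (hl : l.Nodup) (hlen : l.length = Fintype.card ι)
    (f : ι → M) : ∑ i, f i = (l.map f).sum := by
  rw [← List.sum_toFinset f hl,
    Finset.eq_univ_of_card l.toFinset (by rw [List.toFinset_card_of_nodup hl, hlen])]

theorem Complex.card_nthRootsFinset {n : ℕ} (hn : n ≠ 0) {a : ℂ} (ha : a ≠ 0) :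
    (nthRootsFinset n a).card = n := by
  classical
  have hζ := Complex.isPrimitiveRoot_exp n hn
  rw [nthRootsFinset_def, Multiset.toFinset_card_of_nodup (hζ.nthRoots_nodup ha),
    hζ.card_nthRoots, if_pos (IsAlgClosed.exists_pow_nat_eq a (Nat.pos_of_ne_zero hn))]

theorem eval_FFermat (v : Fin 4 → ℂ) : eval v FFermat = ∑ i, v i ^ 4 := by
  simp [FFermat, Fin.sum_univ_four]

theorem eval_FFermat_of_nodup {p q r s : Fin 4} (h : [p, q, r, s].Nodup) (v : Fin 4 → ℂ) :
    eval v FFermat = v p ^ 4 + v q ^ 4 + v r ^ 4 + v s ^ 4 := by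
  rw [eval_FFermat, Fintype.sum_eq_sum_list_of_nodup h rfl]
  simp [add_assoc]

theorem pderiv_FFermat (i : Fin 4) : pderiv i FFermat = 4 * X i ^ 3 := by
  fin_cases i <;> simp [FFermat, pderiv_X]

theorem isSmoothQuartic_FFermat : IsSmoothQuartic FFermat := by
  rintro v hv ⟨-, hd⟩
  exact hv (funext fun i ↦ by simpa [pderiv_FFermat] using hd i)

theorem pairLine_mem_linesOn_FFermat {p q r s : Fin 4} (h : [p, q, r, s].Nodup) {α β : ℂ}
    (hα : α ^ 4 = -1) (hβ : β ^ 4 = -1) : pairLine p q r s α β ∈ linesOn FFermat := by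
  obtain ⟨⟨hpq, -, hps⟩, ⟨hqr, hqs⟩, hrs⟩ :
      (p ≠ q ∧ p ≠ r ∧ p ≠ s) ∧ (q ≠ r ∧ q ≠ s) ∧ r ≠ s := by
    simpa using h
  refine ⟨finrank_pairLine hpq.symm hqr hqs hps.symm hrs.symm, fun v hv ↦ ?_⟩
  rw [mem_pairLine] at hv
  rw [eval_FFermat_of_nodup h, hv.1, hv.2]
  linear_combination v p ^ 4 * hα + v r ^ 4 * hβ

theorem exists_eq_pairLine_of_mem_linesOn_FFermat {W : Submodule ℂ (Fin 4 → ℂ)}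
    (hW : W ∈ linesOn FFermat) : ∃ p q r s : Fin 4, [p, q, r, s].Nodup ∧ ∃ α β : ℂ,
      α ^ 4 = -1 ∧ β ^ 4 = -1 ∧ W = pairLine p q r s α β := by
  obtain ⟨hrank, hvan⟩ := hW
  obtain ⟨i, j, a, haW, b, hbW, hai, haj, hbi, hbj⟩ := W.exists_pivot_pair (by omega)
  obtain ⟨k, l, hnd⟩ : ∃ k l, [i, j, k, l].Nodup :=
    (by decide : ∀ i j : Fin 4, i ≠ j → ∃ k l, [i, j, k, l].Nodup) i j
      (by rintro rfl; simp [hai] at haj)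
  have hform : ∀ s t : ℂ,
      s ^ 4 + t ^ 4 + (a k * s + b k * t) ^ 4 + (a l * s + b l * t) ^ 4 = 0 := fun s t ↦ by
    have h := hvan _ (add_mem (W.smul_mem s haW) (W.smul_mem t hbW))
    rw [eval_FFermat_of_nodup hnd] at h
    simp only [Pi.add_apply, Pi.smul_apply, smul_eq_mul, hai, haj, hbi, hbj] at h
    linear_combination h
  rw [← W.span_pair_eq_of_pivots hrank ⟨hai, haj⟩ ⟨hbi, hbj⟩ haW hbW]
  rcases fourth_powers_of_linear_forms hform with ⟨hak, hbl, hbk, hal⟩ | ⟨hbk, hal, hak, hbl⟩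
  · have hnd' : [i, l, j, k].Nodup := hnd.perm (.cons i (List.perm_append_singleton l [j, k]))
    refine ⟨i, l, j, k, hnd', a l, b k, hal, hbk, ?_⟩
    exact span_pair_eq_of_pivots (pairLine_mem_linesOn_FFermat hnd' hal hbk).1 ⟨hai, haj⟩
      ⟨hbi, hbj⟩ (by simp [hai, haj, hak]) (by simp [hbi, hbj, hbl])
  · have hnd' : [i, k, j, l].Nodup := hnd.perm (.cons i (.swap k j [l]))
    refine ⟨i, k, j, l, hnd', a k, b l, hak, hbl, ?_⟩
    exact span_pair_eq_of_pivots (pairLine_mem_linesOn_FFermat hnd' hak hbl).1 ⟨hai, haj⟩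
      ⟨hbi, hbj⟩ (by simp [hai, haj, hal]) (by simp [hbi, hbj, hbk])

theorem exists_pairLine_eq_zero_left {p q r s : Fin 4} (h : [p, q, r, s].Nodup) {α β : ℂ}
    (hα : α ^ 4 = -1) (hβ : β ^ 4 = -1) :
    ∃ q' r' s' : Fin 4, [0, q', r', s'].Nodup ∧ ∃ α' β' : ℂ, α' ^ 4 = -1 ∧ β' ^ 4 = -1 ∧
      pairLine p q r s α β = pairLine 0 q' r' s' α' β' := by
  have hzero : ∀ p q r s : Fin 4, [p, q, r, s].Nodup → 0 = p ∨ 0 = q ∨ 0 = r ∨ 0 = s := by decide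
  rcases hzero p q r s h with rfl | rfl | rfl | rfl
  · exact ⟨q, r, s, h, α, β, hα, hβ, rfl⟩
  · exact ⟨p, r, s, h.perm (.swap 0 p [r, s]), α⁻¹, β, inv_pow_eq_neg_one hα, hβ,
      pairLine_swap (ne_zero_of_pow_eq_neg_one four_ne_zero hα)⟩
  · exact ⟨s, p, q, h.perm (List.perm_append_comm (l₁ := [p, q]) (l₂ := [0, s])), β, α, hβ, hα,
      pairLine_comm⟩
  · exact ⟨r, p, q, h.perm ((List.perm_append_comm (l₁ := [p, q]) (l₂ := [r, 0])).trans
      (.swap 0 r [p, q])), β⁻¹, α, inv_pow_eq_neg_one hβ, hα,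
      by rw [pairLine_comm, pairLine_swap (ne_zero_of_pow_eq_neg_one four_ne_zero hβ)]⟩

/-- `(q, r, s)` such that `{0, q}, {r, s}` is a perfect matching of `Fin 4` with `r < s`. -/
def normalMatchings : Finset (Fin 4 × Fin 4 × Fin 4) := {(1, 2, 3), (2, 1, 3), (3, 1, 2)}

theorem nodup_of_mem_normalMatchings {m : Fin 4 × Fin 4 × Fin 4} (hm : m ∈ normalMatchings) :
    [0, m.1, m.2.1, m.2.2].Nodup := by
  revert m
  decide

noncomputable def normalLine (x : (Fin 4 × Fin 4 × Fin 4) × ℂ × ℂ) : Submodule ℂ (Fin 4 → ℂ) :=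
  pairLine 0 x.1.1 x.1.2.1 x.1.2.2 x.2.1 x.2.2

theorem exists_pairLine_eq_normalLine {p q r s : Fin 4} (h : [p, q, r, s].Nodup) {α β : ℂ}
    (hα : α ^ 4 = -1) (hβ : β ^ 4 = -1) : ∃ m ∈ normalMatchings, ∃ α' β' : ℂ,
      α' ^ 4 = -1 ∧ β' ^ 4 = -1 ∧ pairLine p q r s α β = normalLine (m, α', β') := by
  obtain ⟨q, r, s, h, α, β, hα, hβ, heq⟩ := exists_pairLine_eq_zero_left h hα hβ
  have hmem : ∀ q r s : Fin 4, [0, q, r, s].Nodup → r < s → (q, r, s) ∈ normalMatchings := by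
    decide
  rcases lt_or_gt_of_ne (show r ≠ s by simp at h; tauto) with hrs | hsr
  · exact ⟨_, hmem q r s h hrs, α, β, hα, hβ, heq⟩
  · refine ⟨_, hmem q s r (h.perm (.cons 0 (.cons q (.swap s r [])))) hsr, α, β⁻¹, hα,
      inv_pow_eq_neg_one hβ, ?_⟩
    rw [heq, normalLine, pairLine_comm, pairLine_swap (ne_zero_of_pow_eq_neg_one four_ne_zero hβ),
      pairLine_comm]

theorem normalLine_injOn : Set.InjOn normalLine
    ↑(normalMatchings ×ˢ nthRootsFinset 4 (-1 : ℂ) ×ˢ nthRootsFinset 4 (-1 : ℂ)) := by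
  rintro ⟨m, α, β⟩ hx ⟨m', α', β'⟩ hx' heq
  simp only [Finset.coe_product, Set.mem_prod, Finset.mem_coe, mem_nthRootsFinset four_pos]
    at hx hx'
  have hα' := ne_zero_of_pow_eq_neg_one four_ne_zero hx'.2.1
  have hβ' := ne_zero_of_pow_eq_neg_one four_ne_zero hx'.2.2
  -- the test vectors `e₀ + α e_q` and `e_r + β e_s` of the first line pin down the second
  have hu := SetLike.ext_iff.mp heq (Pi.single 0 1 + Pi.single m.1 α)
  have hw := SetLike.ext_iff.mp heq (Pi.single m.2.1 1 + Pi.single m.2.2 β)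
  clear heq
  simp only [normalMatchings, Finset.mem_insert, Finset.mem_singleton] at hx hx'
  obtain ⟨rfl | rfl | rfl, -, -⟩ := hx <;> obtain ⟨rfl | rfl | rfl, -, -⟩ := hx' <;>
    simp_all [normalLine]

theorem linesOn_FFermat_eq_image : linesOn FFermat =
    ↑((normalMatchings ×ˢ nthRootsFinset 4 (-1 : ℂ) ×ˢ nthRootsFinset 4 (-1 : ℂ)).image
      normalLine) := by
  ext W
  simp only [Finset.coe_image, Finset.coe_product, Set.mem_image, Set.mem_prod, Finset.mem_coe,
    mem_nthRootsFinset four_pos]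
  constructor
  · intro hW
    obtain ⟨p, q, r, s, h, α, β, hα, hβ, rfl⟩ := exists_eq_pairLine_of_mem_linesOn_FFermat hW
    obtain ⟨m, hm, α', β', hα', hβ', heq⟩ := exists_pairLine_eq_normalLine h hα hβ
    exact ⟨(m, α', β'), ⟨hm, hα', hβ'⟩, heq.symm⟩
  · rintro ⟨⟨m, α, β⟩, ⟨hm, hα, hβ⟩, rfl⟩
    exact pairLine_mem_linesOn_FFermat (nodup_of_mem_normalMatchings hm) hα hβ

/-- the Fermat quartic is smooth and contains exactly 48 lines. -/
theorem Fermat_smooth_and_48_lines :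
    IsSmoothQuartic FFermat ∧ (linesOn FFermat).ncard = 48 := by
  refine ⟨isSmoothQuartic_FFermat, ?_⟩
  rw [linesOn_FFermat_eq_image, Set.ncard_coe_finset, Finset.card_image_of_injOn normalLine_injOn,
    Finset.card_product, Finset.card_product,
    Complex.card_nthRootsFinset four_ne_zero (neg_ne_zero.mpr one_ne_zero)]
  rfl
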